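/- For φ(s;α) = 1 − 1/(1 + 10 α s), C_v(s) = 0.5 s, and K > 0, let s†(α) = min(1, max(0, √(K/(5α)) − 1/(10α))) for α > 0. Then the map α ↦ φ(s†(α); α) is non-decreasing on (0,∞). In particular, in the interior regime where 0 < s†(α) < 1, α·s†(α) = √(αK/5) − 0.1, which is strictly increasing in α. -/

import Mathlib

/-! The detection probability `1 - 1/(1 + 10αs)` depends on `α` and `s` only through the product
`αs`, and it is increasing in that product. At the clamped optimum,
`α · s†(α) = min(α, max(0, √(αK/5) - 0.1))`, because `α · √(K/(5α)) = √(αK/5)`; each piece of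
this expression is non-decreasing in `α`, hence so is the detection probability. -/

open Real Set

noncomputable def detectionProb (s α : ℝ) : ℝ := 1 - 1 / (1 + 10 * α * s)

noncomputable def optimalEffort (K α : ℝ) : ℝ := min 1 (max 0 (√(K / (5 * α)) - 1 / (10 * α)))

lemma detectionProb_le_of_mul_le {s t α β : ℝ} (h₀ : 0 ≤ α * s) (h : α * s ≤ β * t) :
    detectionProb s α ≤ detectionProb t β := by
  simp only [detectionProb, mul_assoc]
  gcongr

lemma optimalEffort_nonneg (K α : ℝ) : 0 ≤ optimalEffort K α :=
  le_min zero_le_one (le_max_left _ _)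

lemma mul_sqrt_div_mul_self {a : ℝ} (ha : 0 < a) (b c : ℝ) : a * √(b / (c * a)) = √(a * b / c) :=
  calc a * √(b / (c * a)) = √(a ^ 2) * √(b / (c * a)) := by rw [sqrt_sq ha.le]
    _ = √(a ^ 2 * (b / (c * a))) := (sqrt_mul (sq_nonneg a) _).symm
    _ = √(a * b / c) := by congr 1; field_simp

lemma mul_sqrt_sub_eq (K : ℝ) {α : ℝ} (hα : 0 < α) :
    α * (√(K / (5 * α)) - 1 / (10 * α)) = √(α * K / 5) - 0.1 := by
  rw [mul_sub, mul_sqrt_div_mul_self hα, mul_one_div, div_mul_cancel_right₀ hα.ne']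
  norm_num

lemma mul_optimalEffort (K : ℝ) {α : ℝ} (hα : 0 < α) :
    α * optimalEffort K α = min α (max 0 (√(α * K / 5) - 0.1)) := by
  rw [optimalEffort, mul_min_of_nonneg _ _ hα.le, mul_max_of_nonneg _ _ hα.le,
    mul_sqrt_sub_eq K hα, mul_one, mul_zero]

lemma monotoneOn_mul_optimalEffort {K : ℝ} (hK : 0 ≤ K) :
    MonotoneOn (fun α => α * optimalEffort K α) (Ioi 0) := by
  intro a ha b hb hab
  simp only [mul_optimalEffort K ha, mul_optimalEffort K hb]
  gcongr

/-- For `φ(s;α)=1−1/(1+10αs)`, cost `0.5s`, and `K > 0`, with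
`s†(α)=min(1, max(0, √(K/(5α)) − 1/(10α)))`, the map `α ↦ φ(s†(α);α)` is
non-decreasing on `(0,∞)`; in the interior regime `αs†(α) = √(αK/5) − 0.1`,
which is strictly increasing in `α`. -/
theorem stmt_10 (K : ℝ) (hK : 0 < K) :
    (∀ α₁ α₂ : ℝ, 0 < α₁ → α₁ ≤ α₂ →
      1 - 1 / (1 + 10 * α₁ * min 1 (max 0 (Real.sqrt (K / (5 * α₁)) - 1 / (10 * α₁))))
        ≤ 1 - 1 / (1 + 10 * α₂ * min 1 (max 0 (Real.sqrt (K / (5 * α₂)) - 1 / (10 * α₂))))) ∧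
    (∀ α : ℝ, 0 < α →
      0 < Real.sqrt (K / (5 * α)) - 1 / (10 * α) →
      Real.sqrt (K / (5 * α)) - 1 / (10 * α) < 1 →
      α * (Real.sqrt (K / (5 * α)) - 1 / (10 * α)) = Real.sqrt (α * K / 5) - 0.1) ∧
    (∀ α₁ α₂ : ℝ, 0 < α₁ → α₁ < α₂ →
      Real.sqrt (α₁ * K / 5) - 0.1 < Real.sqrt (α₂ * K / 5) - 0.1) := by
  refine ⟨fun α₁ α₂ h₁ h₁₂ => ?_, fun α hα _ _ => mul_sqrt_sub_eq K hα, fun α₁ α₂ h₁ h₁₂ => ?_⟩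
  · exact detectionProb_le_of_mul_le (mul_nonneg h₁.le (optimalEffort_nonneg K α₁))
      (monotoneOn_mul_optimalEffort hK.le h₁ (h₁.trans_le h₁₂) h₁₂)
  · gcongr
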